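/- arXiv:1607.06983 — 9 statements merged into one kernel-verified Lean document; each statement's English description precedes it below -/
import Mathlib

section
/- The quadratic function f(x) = xᵀAx − 2bᵀx + c (A symmetric) is non-negative on R^M if and only if A is positive semidefinite, b lies in the range of A, and c − bᵀA⁺b ≥ 0. -/
/-!
If `f ≥ 0`, restricting `f` to a line `t ↦ t • x` gives a nonnegative quadratic polynomial in `t`,
so `xᵀAx ≥ 0`; on a line through a kernel vector `v` of `A` it is affine, so `b ⊥ ker A`, which for
symmetric `A` means `b ∈ range A`. Once `A y = b`, completing the square gives
`f x = (x - y)ᵀA(x - y) + c - bᵀy`, and `y = A⁺b` is such a point, at which `f` equals `c - bᵀA⁺b`.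
-/

open Matrix

section Scalar

variable {𝕜 : Type*} [Field 𝕜] [LinearOrder 𝕜] [IsStrictOrderedRing 𝕜]

theorem nonneg_of_forall_quadratic_nonneg {q a c : 𝕜} (h : ∀ t, 0 ≤ q * t ^ 2 + a * t + c) :
    0 ≤ q := by
  by_contra! hq
  have hc : 0 ≤ c := by simpa using h 0
  have heven (t : 𝕜) : 0 ≤ q * t ^ 2 + c := by linarith [h t, h (-t), neg_sq t]
  have ht : 1 ≤ 1 + c / -q := le_add_of_nonneg_right (div_nonneg hc (neg_nonneg.mpr hq.le))
  have hqt : q * (1 + c / -q) = q - c := by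
    field_simp [hq.ne]
    ring
  -- `q t² + c = (q - c) t + c ≤ q < 0` at `t = 1 + c / -q ≥ 1`
  nlinarith [heven (1 + c / -q)]

theorem eq_zero_of_forall_linear_nonneg {a c : 𝕜} (h : ∀ t, 0 ≤ a * t + c) : a = 0 := by
  by_contra ha
  have := h (-(c + 1) / a)
  rw [mul_div_cancel₀ _ ha] at this
  linarith

end Scalar

namespace Matrix

variable {n R : Type*} [Fintype n]

theorem IsSymm.dotProduct_mulVec_comm [CommSemiring R] {A : Matrix n n R} (hA : A.IsSymm)
    (x y : n → R) : x ⬝ᵥ A *ᵥ y = y ⬝ᵥ A *ᵥ x := by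
  rw [dotProduct_mulVec, ← mulVec_transpose, hA.eq, dotProduct_comm]

theorem IsSymm.exists_mulVec_eq_of_orthogonal_ker [CommRing R] {A G : Matrix n n R}
    (hA : A.IsSymm) (hG : A * G * A = A) {b : n → R} (hb : ∀ v, A *ᵥ v = 0 → b ⬝ᵥ v = 0) :
    ∃ z, A *ᵥ z = b := by
  refine ⟨Gᵀ *ᵥ b, dotProduct_eq _ _ fun x => ?_⟩
  -- `x - G A x ∈ ker A`, so `b ⬝ x = b ⬝ G A x`
  have hker : A *ᵥ (x - (G * A) *ᵥ x) = 0 := by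
    rw [mulVec_sub, mulVec_mulVec, ← Matrix.mul_assoc, hG, sub_self]
  have hbx := hb _ hker
  rw [dotProduct_sub, sub_eq_zero] at hbx
  rw [hbx, dotProduct_mulVec, ← mulVec_transpose, transpose_mul, hA.eq, mulVec_mulVec]

def quadratic [CommRing R] (A : Matrix n n R) (b : n → R) (c : R) (x : n → R) : R :=
  x ⬝ᵥ A *ᵥ x - 2 * (b ⬝ᵥ x) + c

variable [CommRing R] {A : Matrix n n R} {b : n → R} {c : R}

theorem quadratic_smul (t : R) (x : n → R) :
    quadratic A b c (t • x) = (x ⬝ᵥ A *ᵥ x) * t ^ 2 + (-2 * (b ⬝ᵥ x)) * t + c := by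
  simp only [quadratic, mulVec_smul, dotProduct_smul, smul_dotProduct, smul_eq_mul]
  ring

theorem IsSymm.quadratic_eq (hA : A.IsSymm) {y : n → R} (hy : A *ᵥ y = b) (x : n → R) :
    quadratic A b c x = (x - y) ⬝ᵥ A *ᵥ (x - y) + (c - b ⬝ᵥ y) := by
  have hyx : y ⬝ᵥ A *ᵥ x = b ⬝ᵥ x := by rw [hA.dotProduct_mulVec_comm, hy, dotProduct_comm]
  have hyy : y ⬝ᵥ A *ᵥ y = b ⬝ᵥ y := by rw [hy, dotProduct_comm]
  rw [quadratic, mulVec_sub, dotProduct_sub, sub_dotProduct, sub_dotProduct,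
    hA.dotProduct_mulVec_comm x y, hyx, hyy]
  ring

variable {𝕜 : Type*} [Field 𝕜] [LinearOrder 𝕜] [IsStrictOrderedRing 𝕜]
  {A : Matrix n n 𝕜} {b : n → 𝕜} {c : 𝕜}

theorem dotProduct_mulVec_self_nonneg_of_quadratic_nonneg (h : ∀ x, 0 ≤ quadratic A b c x)
    (x : n → 𝕜) : 0 ≤ x ⬝ᵥ A *ᵥ x :=
  nonneg_of_forall_quadratic_nonneg fun t => quadratic_smul (A := A) (b := b) t x ▸ h (t • x)

theorem dotProduct_eq_zero_of_quadratic_nonneg (h : ∀ x, 0 ≤ quadratic A b c x) {v : n → 𝕜}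
    (hv : A *ᵥ v = 0) : b ⬝ᵥ v = 0 := by
  have hline (t : 𝕜) : 0 ≤ (-2 * (b ⬝ᵥ v)) * t + c := by
    simpa [quadratic_smul, hv] using h (t • v)
  simpa using eq_zero_of_forall_linear_nonneg hline

end Matrix

theorem quadratic_nonneg_iff_general {M : ℕ}
    (A Ap : Matrix (Fin M) (Fin M) ℝ)
    (hsymm : Aᵀ = A)
    (h1 : A * Ap * A = A)
    (b : Fin M → ℝ) (c : ℝ) :
    (∀ x : Fin M → ℝ, 0 ≤ x ⬝ᵥ A.mulVec x - 2 * (b ⬝ᵥ x) + c) ↔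
      A.PosSemidef ∧ (∃ z : Fin M → ℝ, A.mulVec z = b) ∧
        0 ≤ c - b ⬝ᵥ Ap.mulVec b := by
  have hA : A.IsSymm := hsymm
  have hApb {z : Fin M → ℝ} (hz : A *ᵥ z = b) : A *ᵥ (Ap *ᵥ b) = b := by
    rw [← hz, mulVec_mulVec, mulVec_mulVec, h1]
  constructor
  · intro h
    obtain ⟨z, hz⟩ := hA.exists_mulVec_eq_of_orthogonal_ker h1
      fun v hv => dotProduct_eq_zero_of_quadratic_nonneg h hv
    refine ⟨.of_dotProduct_mulVec_nonneg (isHermitian_iff_isSymm.mpr hA)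
      fun x => by simpa using dotProduct_mulVec_self_nonneg_of_quadratic_nonneg h x,
      ⟨z, hz⟩, ?_⟩
    have hmin := h (Ap *ᵥ b)
    rwa [← quadratic, hA.quadratic_eq (hApb hz), sub_self, mulVec_zero, dotProduct_zero,
      zero_add] at hmin
  · rintro ⟨hpsd, ⟨z, hz⟩, hc⟩ x
    rw [← quadratic, hA.quadratic_eq (hApb hz)]
    exact add_nonneg (by simpa using hpsd.dotProduct_mulVec_nonneg (x - Ap *ᵥ b)) hc

theorem quadratic_nonneg_iff {M : ℕ}
    (A Ap : Matrix (Fin M) (Fin M) ℝ)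
    (hsymm : Aᵀ = A)
    (h1 : A * Ap * A = A) (h2 : Ap * A * Ap = Ap)
    (h3 : (A * Ap)ᵀ = A * Ap) (h4 : (Ap * A)ᵀ = Ap * A)
    (b : Fin M → ℝ) (c : ℝ) :
    (∀ x : Fin M → ℝ, 0 ≤ x ⬝ᵥ A.mulVec x - 2 * (b ⬝ᵥ x) + c) ↔
      A.PosSemidef ∧ (∃ z : Fin M → ℝ, A.mulVec z = b) ∧
        0 ≤ c - b ⬝ᵥ Ap.mulVec b :=
  quadratic_nonneg_iff_general A Ap hsymm h1 b c
end

section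
/- The quadratic function f(x) = xᵀAx − 2bᵀx + c (A symmetric) is positive on all of R^M if and only if A is positive semidefinite, b lies in the range of A, and c − bᵀA⁺b > 0. -/
/-!
Restricting `f` to a line `t ↦ t • x` gives a real quadratic in `t` that is everywhere positive,
so its leading coefficient `xᵀAx` is nonnegative, and for `x ∈ ker A` its linear coefficient
`-2 bᵀx` vanishes; for symmetric `A` the latter says `b ∈ (ker A)ᗮ = range A`. Once `b = A z`,
completing the square gives `f x = (x - z)ᵀA(x - z) + (c - zᵀAz)`, and `zᵀAz = bᵀA⁺b` already
follows from `A A⁺ A = A`; the minimum `c - bᵀA⁺b` is attained at `x = A⁺b`.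
-/

open Matrix

lemma nonneg_of_forall_quadratic_pos {a p c : ℝ} (h : ∀ t, 0 < a * (t * t) + p * t + c) :
    0 ≤ a := by
  have hdiscrim : p ^ 2 - 4 * a * c ≤ 0 := discrim_le_zero fun t => (h t).le
  have hc : 0 < c := by simpa using h 0
  nlinarith [sq_nonneg p]

lemma eq_zero_of_forall_linear_pos {p c : ℝ} (h : ∀ t, 0 < p * t + c) : p = 0 := by
  have hdiscrim : p ^ 2 - 4 * 0 * c ≤ 0 := discrim_le_zero fun t => by simpa using (h t).le
  exact pow_eq_zero_iff two_ne_zero |>.mp (le_antisymm (by linarith) (sq_nonneg p))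

namespace Matrix

lemma IsHermitian.exists_mulVec_eq_of_dotProduct_ker_eq_zero {n 𝕜 : Type*} [Fintype n]
    [DecidableEq n] [RCLike 𝕜] {A : Matrix n n 𝕜} (hA : A.IsHermitian) {b : n → 𝕜}
    (hb : ∀ r, A *ᵥ r = 0 → b ⬝ᵥ star r = 0) : ∃ z, A *ᵥ z = b := by
  have hT := isSymmetric_toEuclideanLin_iff.mpr hA
  obtain ⟨z, hz⟩ : WithLp.toLp 2 b ∈ LinearMap.range (toEuclideanLin A) := by
    rw [← Submodule.orthogonal_orthogonal (LinearMap.range _), hT.orthogonal_range]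
    exact fun r hr => hb r.ofLp (congrArg WithLp.ofLp hr)
  exact ⟨z.ofLp, congrArg WithLp.ofLp hz⟩

section Quadratic

variable {n R : Type*} [Fintype n] [CommRing R] {A : Matrix n n R}

lemma IsSymm.mulVec_dotProduct (hA : A.IsSymm) (x y : n → R) :
    (A *ᵥ x) ⬝ᵥ y = x ⬝ᵥ A *ᵥ y := by
  rw [← vecMul_transpose, hA.eq, dotProduct_mulVec]

lemma IsSymm.dotProduct_mulVec_sub_two_mul_add (hA : A.IsSymm) (z x : n → R) (c : R) :
    x ⬝ᵥ A *ᵥ x - 2 * ((A *ᵥ z) ⬝ᵥ x) + c =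
      (x - z) ⬝ᵥ A *ᵥ (x - z) + (c - z ⬝ᵥ A *ᵥ z) := by
  have hxz : x ⬝ᵥ A *ᵥ z = (A *ᵥ z) ⬝ᵥ x := dotProduct_comm _ _
  simp only [mulVec_sub, sub_dotProduct, dotProduct_sub, hxz, ← hA.mulVec_dotProduct z x]
  ring

lemma IsSymm.mulVec_dotProduct_mulVec_mulVec {G : Matrix n n R} (hA : A.IsSymm)
    (hG : A * G * A = A) (z : n → R) : (A *ᵥ z) ⬝ᵥ G *ᵥ (A *ᵥ z) = z ⬝ᵥ A *ᵥ z := by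
  rw [hA.mulVec_dotProduct, mulVec_mulVec, mulVec_mulVec, hG]

end Quadratic

lemma forall_pos_restrict_line {n : Type*} [Fintype n] {A : Matrix n n ℝ} {b : n → ℝ} {c : ℝ}
    (h : ∀ x, 0 < x ⬝ᵥ A *ᵥ x - 2 * (b ⬝ᵥ x) + c) (x : n → ℝ) :
    ∀ t, 0 < (x ⬝ᵥ A *ᵥ x) * (t * t) + (-2 * (b ⬝ᵥ x)) * t + c := by
  intro t
  convert h (t • x) using 1
  simp only [mulVec_smul, dotProduct_smul, smul_dotProduct, smul_eq_mul]
  ring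

end Matrix

theorem quadratic_pos_iff_general {M : ℕ}
    (A Ap : Matrix (Fin M) (Fin M) ℝ)
    (hsymm : Aᵀ = A)
    (h1 : A * Ap * A = A)
    (b : Fin M → ℝ) (c : ℝ) :
    (∀ x : Fin M → ℝ, 0 < x ⬝ᵥ A.mulVec x - 2 * (b ⬝ᵥ x) + c) ↔
      A.PosSemidef ∧ (∃ z : Fin M → ℝ, A.mulVec z = b) ∧
        0 < c - b ⬝ᵥ Ap.mulVec b := by
  have hS : A.IsSymm := hsymm
  have hA : A.IsHermitian := isHermitian_iff_isSymm.mpr hS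
  constructor
  · intro h
    have hpsd : A.PosSemidef := .of_dotProduct_mulVec_nonneg hA fun x =>
      nonneg_of_forall_quadratic_pos (forall_pos_restrict_line h x)
    obtain ⟨z, rfl⟩ : ∃ z, A *ᵥ z = b := by
      refine hA.exists_mulVec_eq_of_dotProduct_ker_eq_zero fun r hr => ?_
      have hline := forall_pos_restrict_line h r
      simp only [hr, dotProduct_zero, zero_mul, zero_add] at hline
      simpa using eq_zero_of_forall_linear_pos hline
    have hker : A *ᵥ (Ap *ᵥ (A *ᵥ z) - z) = 0 := by
      rw [mulVec_sub, mulVec_mulVec, mulVec_mulVec, h1, sub_self]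
    refine ⟨hpsd, ⟨z, rfl⟩, ?_⟩
    have hmin := h (Ap *ᵥ (A *ᵥ z))
    rwa [hS.dotProduct_mulVec_sub_two_mul_add z, hker, dotProduct_zero, zero_add,
      ← hS.mulVec_dotProduct_mulVec_mulVec h1] at hmin
  · rintro ⟨hpsd, ⟨z, rfl⟩, hc⟩ x
    rw [hS.mulVec_dotProduct_mulVec_mulVec h1] at hc
    rw [hS.dotProduct_mulVec_sub_two_mul_add z]
    have hsq : 0 ≤ (x - z) ⬝ᵥ A *ᵥ (x - z) := by
      simpa only [star_trivial] using hpsd.dotProduct_mulVec_nonneg (x - z)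
    exact add_pos_of_nonneg_of_pos hsq hc

theorem quadratic_pos_iff {M : ℕ}
    (A Ap : Matrix (Fin M) (Fin M) ℝ)
    (hsymm : Aᵀ = A)
    (h1 : A * Ap * A = A) (h2 : Ap * A * Ap = Ap)
    (h3 : (A * Ap)ᵀ = A * Ap) (h4 : (Ap * A)ᵀ = Ap * A)
    (b : Fin M → ℝ) (c : ℝ) :
    (∀ x : Fin M → ℝ, 0 < x ⬝ᵥ A.mulVec x - 2 * (b ⬝ᵥ x) + c) ↔
      A.PosSemidef ∧ (∃ z : Fin M → ℝ, A.mulVec z = b) ∧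
        0 < c - b ⬝ᵥ Ap.mulVec b :=
  quadratic_pos_iff_general A Ap hsymm h1 b c
end

section
/- If f(x) = xᵀAx − 2bᵀx + c is a quadratic function (A symmetric) that is bounded from below on R^M, then A is positive semidefinite and b ∈ range(A). -/
/-!
Restricting `f` to a line `t ↦ t • x` gives the one-variable quadratic
`(xᵀAx) t² - 2 (bᵀx) t + c`, which can only be bounded below if `xᵀAx ≥ 0`; hence `A` is
positive semidefinite. For `w ∈ ker A` the restriction is the affine function `c - 2 (bᵀw) t`,
so boundedness forces `b ⊥ ker A`, and for symmetric `A` the orthogonal complement of the kernel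
is the range.
-/

open Matrix

theorem nonneg_of_forall_le_quadratic {a b c m : ℝ} (h : ∀ t, m ≤ a * t ^ 2 + b * t + c) :
    0 ≤ a := by
  by_contra! ha
  have hmc : m ≤ c := by simpa using h 0
  set t := √((c - m + 1) / -a)
  have ht : a * t ^ 2 = m - c - 1 := by
    rw [Real.sq_sqrt (div_nonneg (by linarith) (by linarith)), mul_div_assoc', div_neg,
      mul_div_cancel_left₀ _ ha.ne]
    ring
  -- Adding the bounds at `t` and `-t` cancels the linear term.
  nlinarith [h t, h (-t)]

theorem eq_zero_of_forall_le_linear {b c m : ℝ} (h : ∀ t, m ≤ b * t + c) : b = 0 := by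
  by_contra hb
  have := h ((m - c - 1) / b)
  rw [mul_div_cancel₀ _ hb] at this
  linarith

theorem LinearMap.IsSymmetric.range_eq_orthogonal_ker {𝕜 E : Type*} [RCLike 𝕜]
    [NormedAddCommGroup E] [InnerProductSpace 𝕜 E] [FiniteDimensional 𝕜 E]
    {T : E →ₗ[𝕜] E} (hT : T.IsSymmetric) : LinearMap.range T = (LinearMap.ker T)ᗮ := by
  rw [← hT.orthogonal_range, Submodule.orthogonal_orthogonal]

theorem Matrix.IsHermitian.exists_mulVec_eq_iff {𝕜 n : Type*} [RCLike 𝕜] [Fintype n]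
    [DecidableEq n] {A : Matrix n n 𝕜} (hA : A.IsHermitian) (b : n → 𝕜) :
    (∃ z, A *ᵥ z = b) ↔ ∀ w, A *ᵥ w = 0 → star w ⬝ᵥ b = 0 := by
  have hb := SetLike.ext_iff.mp
    (isSymmetric_toEuclideanLin_iff.mpr hA).range_eq_orthogonal_ker (WithLp.toLp 2 b)
  rw [LinearMap.mem_range, Submodule.mem_orthogonal, (WithLp.toLp_surjective 2).exists,
    (WithLp.toLp_surjective 2).forall] at hb
  simpa only [LinearMap.mem_ker, toLpLin_toLp, toLin'_apply, EuclideanSpace.inner_toLp_toLp,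
    (WithLp.toLp_injective 2).eq_iff, WithLp.ofLp_zero, dotProduct_comm b] using hb

theorem Matrix.smul_dotProduct_mulVec_smul_sub_two_mul_dotProduct {n : Type*} [Fintype n]
    (A : Matrix n n ℝ) (b x : n → ℝ) (c t : ℝ) :
    (t • x) ⬝ᵥ A *ᵥ (t • x) - 2 * (b ⬝ᵥ t • x) + c =
      (x ⬝ᵥ A *ᵥ x) * t ^ 2 + -2 * (b ⬝ᵥ x) * t + c := by
  simp only [mulVec_smul, smul_dotProduct, dotProduct_smul, smul_eq_mul]
  ring

theorem quadratic_bddBelow_posSemidef_range {M : ℕ}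
    (A : Matrix (Fin M) (Fin M) ℝ) (hsymm : Aᵀ = A)
    (b : Fin M → ℝ) (c : ℝ)
    (hbdd : ∃ m : ℝ, ∀ x : Fin M → ℝ,
      m ≤ x ⬝ᵥ A.mulVec x - 2 * (b ⬝ᵥ x) + c) :
    A.PosSemidef ∧ ∃ z : Fin M → ℝ, A.mulVec z = b := by
  obtain ⟨m, hm⟩ := hbdd
  have hline : ∀ x t, m ≤ (x ⬝ᵥ A *ᵥ x) * t ^ 2 + -2 * (b ⬝ᵥ x) * t + c := fun x t =>
    smul_dotProduct_mulVec_smul_sub_two_mul_dotProduct A b x c t ▸ hm (t • x)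
  have hA : A.IsHermitian := by rwa [IsHermitian, conjTranspose_eq_transpose_of_trivial]
  refine ⟨.of_dotProduct_mulVec_nonneg hA fun x => nonneg_of_forall_le_quadratic (hline x),
    (hA.exists_mulVec_eq_iff b).mpr fun w hw => ?_⟩
  have hbw : -2 * (b ⬝ᵥ w) = 0 := eq_zero_of_forall_le_linear fun t => by
    simpa only [hw, dotProduct_zero, zero_mul, zero_add] using hline w t
  rw [star_trivial, dotProduct_comm]
  linarith
end

section
/- Every non-negative quadratic function on R^M can be written as a sum of squares of (affine) linear functions, i.e., if f(x) = xᵀAx − 2bᵀx + c (A symmetric) satisfies f(x) ≥ 0 for all x, then there exist N, vectors b⁽ʲ⁾ ∈ R^M and constants cⱼ such that f(x) = Σⱼ₌₁^N (b⁽ʲ⁾ᵀx + cⱼ)². -/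
/-!
Homogenize: `f ≥ 0` makes the quadratic form `(x, t) ↦ xᵀAx - 2t bᵀx + ct²` nonnegative, since it
equals `t² f(x/t)` for `t ≠ 0`, and at `t = 0` it is the leading coefficient of `s ↦ f(s x)`.
Its symmetric matrix is therefore positive semidefinite, hence a sum of rank-one matrices `v vᵀ`
by the spectral theorem, and evaluating the form at `t = 1` writes `f` as `∑ (vᵀ(x, 1))²`.
-/

open Matrix

lemma nonneg_of_forall_quadratic_nonneg_s11 {K : Type*} [Field K] [LinearOrder K]
    [IsStrictOrderedRing K] {a b c : K} (h : ∀ s : K, 0 ≤ a * (s * s) + b * s + c) : 0 ≤ a := by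
  have hd := discrim_le_zero h
  rw [discrim] at hd
  nlinarith [h 0, h 1, h (-1), sq_nonneg b]

lemma smul_dotProduct_mulVec_smul {m R : Type*} [Fintype m] [CommSemiring R]
    (A : Matrix m m R) (s : R) (x : m → R) :
    s • x ⬝ᵥ A *ᵥ (s • x) = s * s * (x ⬝ᵥ A *ᵥ x) := by
  rw [mulVec_smul, smul_dotProduct, dotProduct_smul, smul_eq_mul, smul_eq_mul, mul_assoc]

lemma Matrix.PosSemidef.exists_dotProduct_mulVec_eq_sum_sq {n : Type*} [Fintype n]
    {Q : Matrix n n ℝ} (hQ : Q.PosSemidef) :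
    ∃ (N : ℕ) (v : Fin N → n → ℝ), ∀ y, y ⬝ᵥ Q *ᵥ y = ∑ j, (v j ⬝ᵥ y) ^ 2 := by
  obtain ⟨N, v, rfl⟩ := posSemidef_iff_eq_sum_vecMulVec.mp hQ
  refine ⟨N, v, fun y => ?_⟩
  simp only [star_trivial, sum_mulVec, vecMulVec_mulVec, op_smul_eq_smul, dotProduct_comm y,
    sum_dotProduct, smul_dotProduct, smul_eq_mul, sq]

section homogenization

variable {m : Type*} [Fintype m]

def homogenization {R : Type*} [Neg R] (A : Matrix m m R) (b : m → R) (c : R) :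
    Matrix (m ⊕ Unit) (m ⊕ Unit) R :=
  fromBlocks A (replicateCol Unit (-b)) (replicateRow Unit (-b)) (of fun _ _ => c)

lemma sumElim_dotProduct_homogenization_mulVec {R : Type*} [CommRing R] (A : Matrix m m R)
    (b : m → R) (c : R) (x : m → R) (t : R) :
    Sum.elim x (fun _ => t) ⬝ᵥ homogenization A b c *ᵥ Sum.elim x (fun _ => t) =
      x ⬝ᵥ A *ᵥ x - 2 * t * (b ⬝ᵥ x) + c * t ^ 2 := by
  have hcol : replicateCol Unit (-b) *ᵥ (fun _ => t) = -(t • b) := by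
    ext; simp [mulVec, dotProduct, mul_comm]
  simp only [homogenization, fromBlocks_mulVec, Sum.elim_comp_inl, Sum.elim_comp_inr, hcol,
    replicateRow_mulVec_eq_const, neg_dotProduct, sumElim_dotProduct_sumElim, dotProduct_add,
    dotProduct_neg, dotProduct_smul, dotProduct_comm x b, smul_eq_mul, dotProduct_pUnit,
    Function.const_apply, mul_neg, mulVec, of_apply]
  ring

lemma homogenized_nonneg_of_forall_nonneg {K : Type*} [Field K] [LinearOrder K]
    [IsStrictOrderedRing K] {A : Matrix m m K} {b : m → K} {c : K}
    (hf : ∀ x, 0 ≤ x ⬝ᵥ A *ᵥ x - 2 * (b ⬝ᵥ x) + c) (x : m → K) (t : K) :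
    0 ≤ x ⬝ᵥ A *ᵥ x - 2 * t * (b ⬝ᵥ x) + c * t ^ 2 := by
  rcases eq_or_ne t 0 with rfl | ht
  · have hA : 0 ≤ x ⬝ᵥ A *ᵥ x :=
      nonneg_of_forall_quadratic_nonneg_s11 (b := -2 * (b ⬝ᵥ x)) (c := c) fun s => by
        have hs := hf (s • x)
        rw [smul_dotProduct_mulVec_smul, dotProduct_smul, smul_eq_mul] at hs
        linear_combination hs
    simpa using hA
  · have hscaled := mul_nonneg (sq_nonneg t) (hf (t⁻¹ • x))
    rw [smul_dotProduct_mulVec_smul, dotProduct_smul, smul_eq_mul] at hscaled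
    convert hscaled using 1
    field_simp

lemma posSemidef_homogenization {A : Matrix m m ℝ} (hA : A.IsSymm) {b : m → ℝ} {c : ℝ}
    (hf : ∀ x, 0 ≤ x ⬝ᵥ A *ᵥ x - 2 * (b ⬝ᵥ x) + c) :
    (homogenization A b c).PosSemidef := by
  refine .of_dotProduct_mulVec_nonneg ?_ fun y => ?_
  · exact .fromBlocks (isHermitian_iff_isSymm.mpr hA) (by simp)
      (isHermitian_iff_isSymm.mpr (IsSymm.ext fun _ _ => rfl))
  · obtain ⟨x, t, rfl⟩ : ∃ x t, y = Sum.elim x fun _ => t :=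
      ⟨y ∘ Sum.inl, y (.inr ()), by ext (i | i) <;> rfl⟩
    rw [star_trivial, sumElim_dotProduct_homogenization_mulVec]
    exact homogenized_nonneg_of_forall_nonneg hf x t

end homogenization

theorem nonneg_quadratic_is_sum_of_squares {M : ℕ}
    (A : Matrix (Fin M) (Fin M) ℝ) (hsymm : Aᵀ = A)
    (b : Fin M → ℝ) (c : ℝ)
    (hnonneg : ∀ x : Fin M → ℝ, 0 ≤ x ⬝ᵥ A.mulVec x - 2 * (b ⬝ᵥ x) + c) :
    ∃ (N : ℕ) (bv : Fin N → (Fin M → ℝ)) (cv : Fin N → ℝ),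
      ∀ x : Fin M → ℝ,
        x ⬝ᵥ A.mulVec x - 2 * (b ⬝ᵥ x) + c
          = ∑ j : Fin N, (bv j ⬝ᵥ x + cv j) ^ 2 := by
  obtain ⟨N, v, hv⟩ :=
    (posSemidef_homogenization hsymm hnonneg).exists_dotProduct_mulVec_eq_sum_sq
  refine ⟨N, fun j => v j ∘ Sum.inl, fun j => v j (.inr ()), fun x => ?_⟩
  have hsplit (j : Fin N) :
      v j ⬝ᵥ Sum.elim x (fun _ => 1) = v j ∘ Sum.inl ⬝ᵥ x + v j (.inr ()) := by
    simp [dotProduct, Fintype.sum_sum_type]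
  simpa [sumElim_dotProduct_homogenization_mulVec, hsplit] using hv (Sum.elim x fun _ => 1)
end

section
/- For any vectors b⁽¹⁾, …, b⁽ᴺ⁾ ∈ R^M and scalars c₁, …, c_N, one has (Σⱼ cⱼ b⁽ʲ⁾)ᵀ A⁺ (Σⱼ cⱼ b⁽ʲ⁾) ≤ Σⱼ cⱼ², where A⁺ is the Moore-Penrose pseudoinverse of A = Σⱼ b⁽ʲ⁾b⁽ʲ⁾ᵀ. -/
/-!
Put the `b⁽ʲ⁾` as the rows of a matrix `R`, so that `A = Rᵀ R` and `v := ∑ⱼ cⱼ b⁽ʲ⁾ = Rᵀ c`.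
Since `A` and `Rᵀ` have the same column space, `A A⁺ A = A` upgrades to `A A⁺ Rᵀ = Rᵀ`; hence
`w := R A⁺ v` satisfies `Rᵀ w = v`. Then `vᵀ A⁺ v` equals both `⟪c, w⟫` and `‖w‖²`, so
`0 ≤ ‖c - w‖² = ‖c‖² - vᵀ A⁺ v`.
-/

open Matrix

namespace Matrix

variable {m n : Type*} [Fintype m]

theorem transpose_mul_eq_sum_vecMulVec {α : Type*} [CommSemiring α] (A B : Matrix m n α) :
    Aᵀ * B = ∑ i, vecMulVec (A i) (B i) := by
  ext j k
  simp [mul_apply, vecMulVec_apply, sum_apply]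

variable [Fintype n] [DecidableEq n] {𝕜 : Type*} [CommRing 𝕜] [PartialOrder 𝕜] [StarRing 𝕜]
  [StarOrderedRing 𝕜] [NoZeroDivisors 𝕜] {R : Matrix m n 𝕜} {X : Matrix n n 𝕜}

theorem conjTranspose_mul_self_mul_mul_conjTranspose (hX : Rᴴ * R * X * (Rᴴ * R) = Rᴴ * R) :
    Rᴴ * R * X * Rᴴ = Rᴴ := by
  have h : (Rᴴ * R * X - 1) * (Rᴴ * Rᴴᴴ) = 0 := by
    rw [conjTranspose_conjTranspose, Matrix.sub_mul, hX, Matrix.one_mul, sub_self]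
  rwa [mul_self_mul_conjTranspose_eq_zero, Matrix.sub_mul, Matrix.one_mul, sub_eq_zero] at h

theorem star_mulVec_dotProduct_mulVec_le (hX : Rᴴ * R * X * (Rᴴ * R) = Rᴴ * R) (c : m → 𝕜) :
    star (Rᴴ *ᵥ c) ⬝ᵥ X *ᵥ (Rᴴ *ᵥ c) ≤ star c ⬝ᵥ c := by
  set v := Rᴴ *ᵥ c
  set w := R *ᵥ X *ᵥ v
  have hw : Rᴴ *ᵥ w = v := by
    simp only [w, v, mulVec_mulVec, ← Matrix.mul_assoc,
      conjTranspose_mul_self_mul_mul_conjTranspose hX]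
  have hcw : star v ⬝ᵥ X *ᵥ v = star c ⬝ᵥ w := by
    rw [star_mulVec, conjTranspose_conjTranspose, ← dotProduct_mulVec]
  have hww : star v ⬝ᵥ X *ᵥ v = star w ⬝ᵥ w := by
    nth_rw 1 [← hw]
    rw [star_mulVec, conjTranspose_conjTranspose, ← dotProduct_mulVec]
  have hwc : star w ⬝ᵥ c = star w ⬝ᵥ w := by
    rw [star_dotProduct, ← hcw, hww, ← star_dotProduct]
  have h := dotProduct_star_self_nonneg (c - w)
  rwa [star_sub, sub_dotProduct, dotProduct_sub, dotProduct_sub, ← hcw, hwc, ← hww, sub_self,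
    sub_zero, sub_nonneg] at h

end Matrix

theorem pseudoinverse_inequality_general {M N : ℕ}
    (b : Fin N → (Fin M → ℝ)) (c : Fin N → ℝ)
    (A Ap : Matrix (Fin M) (Fin M) ℝ)
    (hA : A = ∑ j : Fin N, Matrix.vecMulVec (b j) (b j))
    (h1 : A * Ap * A = A) :
    (∑ j : Fin N, c j • b j) ⬝ᵥ Ap.mulVec (∑ j : Fin N, c j • b j)
      ≤ ∑ j : Fin N, (c j) ^ 2 := by
  have hA' : A = (of b)ᴴ * of b := by
    rw [hA, conjTranspose_eq_transpose_of_trivial, transpose_mul_eq_sum_vecMulVec]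
    rfl
  have hv : ∑ j, c j • b j = (of b)ᴴ *ᵥ c := by
    rw [conjTranspose_eq_transpose_of_trivial, mulVec_transpose, vecMul_eq_sum]
    rfl
  subst hA'
  rw [hv]
  simpa [star_trivial, dotProduct, sq] using star_mulVec_dotProduct_mulVec_le h1 c

theorem pseudoinverse_inequality {M N : ℕ}
    (b : Fin N → (Fin M → ℝ)) (c : Fin N → ℝ)
    (A Ap : Matrix (Fin M) (Fin M) ℝ)
    (hA : A = ∑ j : Fin N, Matrix.vecMulVec (b j) (b j))
    (h1 : A * Ap * A = A) (h2 : Ap * A * Ap = Ap)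
    (h3 : (A * Ap)ᵀ = A * Ap) (h4 : (Ap * A)ᵀ = Ap * A) :
    (∑ j : Fin N, c j • b j) ⬝ᵥ Ap.mulVec (∑ j : Fin N, c j • b j)
      ≤ ∑ j : Fin N, (c j) ^ 2 :=
  pseudoinverse_inequality_general b c A Ap hA h1
end

section
/- If there exists α ∈ R^M with b⁽ʲ⁾ᵀα = −cⱼ for all 1 ≤ j ≤ N, then (Σⱼ cⱼ b⁽ʲ⁾)ᵀ A⁺ (Σⱼ cⱼ b⁽ʲ⁾) = Σⱼ cⱼ², where A = Σⱼ b⁽ʲ⁾b⁽ʲ⁾ᵀ. -/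
/-!
Let `B` be the matrix with rows `b⁽ʲ⁾`, so that `A = BᵀB`. The hypothesis says `Bα = -c`, hence
`Σⱼ cⱼ b⁽ʲ⁾ = Bᵀc = A(-α)` lies in the range of `A`. On that range the quadratic form of any
generalized inverse `A⁺` of the symmetric matrix `A` is determined:
`(Ax)ᵀ A⁺ (Ax) = xᵀ A A⁺ A x = xᵀ A x`. With `x = -α` this is `|B(-α)|² = |c|²`.
-/

open Matrix

namespace Matrix

variable {m n R : Type*}

theorem sum_vecMulVec_self_eq_transpose_mul [Fintype m] [NonUnitalNonAssocSemiring R]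
    (b : m → n → R) :
    ∑ j, vecMulVec (b j) (b j) = (of b)ᵀ * of b := by
  ext i k
  simp [mul_apply, vecMulVec_apply, sum_apply]

theorem dotProduct_transpose_mul_self_mulVec [Fintype m] [Fintype n] [CommSemiring R]
    (B : Matrix m n R) (x : n → R) :
    x ⬝ᵥ (Bᵀ * B) *ᵥ x = B *ᵥ x ⬝ᵥ B *ᵥ x := by
  rw [← mulVec_mulVec, dotProduct_mulVec, vecMul_transpose]

theorem IsSymm.mulVec_dotProduct_mulVec_mulVec_of_mul_mul_eq [Fintype n] [CommSemiring R]
    {A G : Matrix n n R} (hA : A.IsSymm) (hG : A * G * A = A) (x : n → R) :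
    A *ᵥ x ⬝ᵥ G *ᵥ (A *ᵥ x) = x ⬝ᵥ A *ᵥ x := by
  conv_lhs => arg 1; rw [← vecMul_transpose, hA.eq]
  rw [← dotProduct_mulVec, mulVec_mulVec, mulVec_mulVec, hG]

end Matrix

theorem pseudoinverse_equality_case_general {M N : ℕ}
    (b : Fin N → (Fin M → ℝ)) (c : Fin N → ℝ)
    (A Ap : Matrix (Fin M) (Fin M) ℝ)
    (hA : A = ∑ j : Fin N, Matrix.vecMulVec (b j) (b j))
    (h1 : A * Ap * A = A)
    (α : Fin M → ℝ) (hα : ∀ j : Fin N, b j ⬝ᵥ α = -c j) :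
    (∑ j : Fin N, c j • b j) ⬝ᵥ Ap.mulVec (∑ j : Fin N, c j • b j)
      = ∑ j : Fin N, (c j) ^ 2 := by
  set B := of b
  have hgram : A = Bᵀ * B := hA.trans (sum_vecMulVec_self_eq_transpose_mul b)
  have hBα : B *ᵥ (-α) = c := funext fun j => by simp [B, mulVec, hα]
  have hv : ∑ j, c j • b j = A *ᵥ (-α) := by
    rw [hgram, ← mulVec_mulVec, hBα, mulVec_transpose, vecMul_eq_sum]
    rfl
  have hAsymm : A.IsSymm := by
    rw [hgram, IsSymm, transpose_mul, transpose_transpose]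
  rw [hv, hAsymm.mulVec_dotProduct_mulVec_mulVec_of_mul_mul_eq h1, hgram,
    dotProduct_transpose_mul_self_mulVec, hBα]
  simp [dotProduct, sq]

theorem pseudoinverse_equality_case {M N : ℕ}
    (b : Fin N → (Fin M → ℝ)) (c : Fin N → ℝ)
    (A Ap : Matrix (Fin M) (Fin M) ℝ)
    (hA : A = ∑ j : Fin N, Matrix.vecMulVec (b j) (b j))
    (h1 : A * Ap * A = A) (h2 : Ap * A * Ap = Ap)
    (h3 : (A * Ap)ᵀ = A * Ap) (h4 : (Ap * A)ᵀ = Ap * A)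
    (α : Fin M → ℝ) (hα : ∀ j : Fin N, b j ⬝ᵥ α = -c j) :
    (∑ j : Fin N, c j • b j) ⬝ᵥ Ap.mulVec (∑ j : Fin N, c j • b j)
      = ∑ j : Fin N, (c j) ^ 2 :=
  pseudoinverse_equality_case_general b c A Ap hA h1 α hα
end

section
/- Suppose f(x) = Σⱼ₌₁^N (b⁽ʲ⁾ᵀx + cⱼ)² + h and also f(x) = Σⱼ₌₁^s (b̂⁽ʲ⁾ᵀx + ĉⱼ)² + ĥ for all x ∈ R^M. Then s ≥ rank(Σⱼ₌₁^N b⁽ʲ⁾b⁽ʲ⁾ᵀ). -/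
/-!
Comparing `f x + f (-x) - 2 f 0` for the two representations shows that both families define
the same quadratic form `x ↦ ∑ⱼ (bⱼ ⬝ x)²`. By polarization a symmetric matrix is determined by
its quadratic form, so `∑ⱼ bⱼ bⱼᵀ = ∑ⱼ b̂ⱼ b̂ⱼᵀ = B̂ᵀ B̂`, where `B̂` has the `s` rows `b̂ⱼ`; its rank
is at most `s`.
-/

open Matrix

variable {R K ι ι' m n : Type*} [Fintype ι] [Fintype ι']

namespace Matrix

theorem sum_vecMulVec_eq_transpose_mul [CommSemiring R] (u : ι → m → R) (v : ι → n → R) :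
    ∑ j, vecMulVec (u j) (v j) = (of u)ᵀ * of v := by
  ext k l
  simp [sum_apply, mul_apply, vecMulVec_apply]

theorem rank_sum_vecMulVec_le [CommSemiring R] [StrongRankCondition R] [Fintype n]
    (u : ι → m → R) (v : ι → n → R) :
    (∑ j, vecMulVec (u j) (v j)).rank ≤ Fintype.card ι := by
  rw [sum_vecMulVec_eq_transpose_mul]
  exact (rank_mul_le_left _ _).trans (rank_le_card_width _)

theorem isSymm_sum_vecMulVec_self [CommSemiring R] (b : ι → m → R) :
    (∑ j, vecMulVec (b j) (b j)).IsSymm := by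
  simp [IsSymm, transpose_sum, transpose_vecMulVec]

theorem dotProduct_sum_vecMulVec_self_mulVec [CommSemiring R] [Fintype m] (b : ι → m → R)
    (x : m → R) : x ⬝ᵥ (∑ j, vecMulVec (b j) (b j)) *ᵥ x = ∑ j, (b j ⬝ᵥ x) ^ 2 := by
  rw [sum_mulVec, dotProduct_sum]
  refine Finset.sum_congr rfl fun j _ => ?_
  rw [vecMulVec_mulVec, dotProduct_smul, op_smul_eq_mul, dotProduct_comm, sq]

theorem IsSymm.ext_of_dotProduct_mulVec [Field K] [NeZero (2 : K)] [Fintype m] [DecidableEq m]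
    {A B : Matrix m m K} (hA : A.IsSymm) (hB : B.IsSymm)
    (h : ∀ x, x ⬝ᵥ A *ᵥ x = x ⬝ᵥ B *ᵥ x) : A = B := by
  ext k l
  have hk := h (Pi.single k 1)
  have hl := h (Pi.single l 1)
  have hkl := h (Pi.single k 1 + Pi.single l 1)
  simp only [mulVec_add, dotProduct_add, add_dotProduct, mulVec_single_one,
    single_one_dotProduct, col_apply] at hk hl hkl
  rw [hA.apply k l, hB.apply k l] at hkl
  exact mul_left_cancel₀ two_ne_zero (by linear_combination hkl - hk - hl)

end Matrix

theorem sum_sq_dotProduct_add_add_neg_eq [CommRing R] [Fintype m] (b : ι → m → R) (c : ι → R)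
    (x : m → R) :
    ∑ j, (b j ⬝ᵥ x + c j) ^ 2 + ∑ j, (b j ⬝ᵥ -x + c j) ^ 2
      = 2 * ∑ j, (b j ⬝ᵥ x) ^ 2 + 2 * ∑ j, c j ^ 2 := by
  simp only [dotProduct_neg, Finset.mul_sum, ← Finset.sum_add_distrib]
  exact Finset.sum_congr rfl fun j _ => by ring

theorem sum_sq_dotProduct_eq_of_forall_sum_sq_dotProduct_add_eq [Field K] [NeZero (2 : K)]
    [Fintype m] {b : ι → m → K} {c : ι → K} {h : K} {b' : ι' → m → K} {c' : ι' → K} {h' : K}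
    (heq : ∀ x, ∑ j, (b j ⬝ᵥ x + c j) ^ 2 + h = ∑ j, (b' j ⬝ᵥ x + c' j) ^ 2 + h')
    (x : m → K) : ∑ j, (b j ⬝ᵥ x) ^ 2 = ∑ j, (b' j ⬝ᵥ x) ^ 2 := by
  have h0 := heq 0
  simp only [dotProduct_zero, zero_add] at h0
  exact mul_left_cancel₀ two_ne_zero <| by
    linear_combination heq x + heq (-x) - 2 * h0 - sum_sq_dotProduct_add_add_neg_eq b c x
      + sum_sq_dotProduct_add_add_neg_eq b' c' x

theorem min_number_of_squares {M N s : ℕ}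
    (b : Fin N → (Fin M → ℝ)) (c : Fin N → ℝ) (h0 : ℝ)
    (b' : Fin s → (Fin M → ℝ)) (c' : Fin s → ℝ) (h1 : ℝ)
    (heq : ∀ x : Fin M → ℝ,
      (∑ j : Fin N, (b j ⬝ᵥ x + c j) ^ 2) + h0
        = (∑ j : Fin s, (b' j ⬝ᵥ x + c' j) ^ 2) + h1) :
    (∑ j : Fin N, Matrix.vecMulVec (b j) (b j)).rank ≤ s := by
  have hgram : ∑ j, vecMulVec (b j) (b j) = ∑ j, vecMulVec (b' j) (b' j) :=
    (isSymm_sum_vecMulVec_self b).ext_of_dotProduct_mulVec (isSymm_sum_vecMulVec_self b')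
      fun x => by
        simp only [dotProduct_sum_vecMulVec_self_mulVec,
          sum_sq_dotProduct_eq_of_forall_sum_sq_dotProduct_add_eq heq x]
  rw [hgram]
  simpa using rank_sum_vecMulVec_le b' b'
end

section
/- Let M ≥ 3, let A ∈ R^{M×M} be symmetric and invertible, and let P ∈ R^{M×M} be symmetric. If ã A − 2APA = 0 where ã = tr(PA), then P = 0. -/
/-!
Cancelling the invertible `A` on the left turns `ã A = 2 A P A` into `ã I = 2 P A`. Taking traces
gives `M ã = 2 ã`, so `ã = 0` as `M ≠ 2`; then `A P A = 0`, and cancelling `A` on both sides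
gives `P = 0`.
-/

open Matrix

theorem Matrix.trace_eq_zero_of_trace_smul_one_eq_smul {n K : Type*} [Fintype n] [DecidableEq n]
    [Field K] {B : Matrix n n K} {k : K} (hk : (Fintype.card n : K) ≠ k)
    (hB : B.trace • (1 : Matrix n n K) = k • B) : B.trace = 0 := by
  have htrace : B.trace * Fintype.card n = k * B.trace := by
    simpa [trace_smul, trace_one, mul_comm] using congrArg trace hB
  have : B.trace * ((Fintype.card n : K) - k) = 0 := by linear_combination htrace
  exact (mul_eq_zero.1 this).resolve_right (sub_ne_zero.2 hk)

theorem no_second_order_terms_general {M : ℕ} (hM : 3 ≤ M)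
    (A P : Matrix (Fin M) (Fin M) ℝ)
    (hdet : A.det ≠ 0)
    (h : (P * A).trace • A - (2 : ℝ) • (A * P * A) = 0) :
    P = 0 := by
  have hA : IsUnit A := (isUnit_iff_isUnit_det A).2 hdet.isUnit
  have hscalar : (P * A).trace • (1 : Matrix (Fin M) (Fin M) ℝ) = (2 : ℝ) • (P * A) :=
    hA.mul_left_cancel <| by
      rw [mul_smul_one, Matrix.mul_smul, ← Matrix.mul_assoc]
      exact sub_eq_zero.1 h
  have htrace : (P * A).trace = 0 :=
    trace_eq_zero_of_trace_smul_one_eq_smul (by rw [Fintype.card_fin]; exact_mod_cast (by omega))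
      hscalar
  have hAPA : A * P * A = 0 := by simpa [htrace] using h
  exact hA.mul_right_eq_zero.1 (hA.mul_left_eq_zero.1 hAPA)

theorem no_second_order_terms {M : ℕ} (hM : 3 ≤ M)
    (A P : Matrix (Fin M) (Fin M) ℝ)
    (hAsymm : Aᵀ = A) (hPsymm : Pᵀ = P)
    (hdet : A.det ≠ 0)
    (h : (P * A).trace • A - (2 : ℝ) • (A * P * A) = 0) :
    P = 0 :=
  no_second_order_terms_general hM A P hdet h
end

section
/- Let σ ≠ 0 and B be the (N+1)×(N+1) symmetric matrix with B_{1,N+1} = B_{N+1,1} = 1, B_{ii} = 2σ for 2 ≤ i ≤ N, and all other entries 0. If a symmetric positive semidefinite matrix A ∈ R^{(N+1)×(N+1)} satisfies ãA − ABA = 0 with ã = (1/2)tr(BA), then det(A) = 0. -/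
/-! For invertible `A`, the equation `ã A = A B A` forces `B A = ã I`. Taking traces gives
`2 ã = (N + 1) ã`, so `ã = 0` once `N ≥ 2`; then `B A = 0`, i.e. `B = 0`, which the gKP matrix
is not. -/

namespace Matrix

variable {K n : Type*} [Fintype n] [DecidableEq n]

theorem mul_eq_smul_one_of_mul_mul_eq_smul [CommRing K] {A B : Matrix n n K} {c : K}
    (hA : IsUnit A.det) (h : A * B * A = c • A) : B * A = c • 1 :=
  calc B * A = A⁻¹ * (A * B * A) := by rw [mul_assoc, nonsing_inv_mul_cancel_left _ _ hA]
    _ = c • 1 := by rw [h, Matrix.mul_smul, nonsing_inv_mul _ hA]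

theorem eq_zero_of_half_trace_smul_eq_mul_mul [Field K] {A B : Matrix n n K}
    (hA : IsUnit A.det) (hn : (Fintype.card n : K) ≠ 2)
    (h : ((1 / 2 : K) * (B * A).trace) • A = A * B * A) : B = 0 := by
  set c := (1 / 2 : K) * (B * A).trace with hc
  have hBA : B * A = c • 1 := mul_eq_smul_one_of_mul_mul_eq_smul hA h.symm
  have htrace : (B * A).trace = c * Fintype.card n := by
    rw [hBA, trace_smul, trace_one, smul_eq_mul]
  have hc0 : c = 0 := by
    rw [htrace] at hc
    by_cases h2 : (2 : K) = 0
    · simpa [h2] using hc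
    · have : c * (2 - Fintype.card n) = 0 := by
        field_simp at hc
        linear_combination hc
      exact (mul_eq_zero.mp this).resolve_right (sub_ne_zero.mpr hn.symm)
  calc B = B * A * A⁻¹ := (mul_nonsing_inv_cancel_right A B hA).symm
    _ = 0 := by rw [hBA, hc0, zero_smul, zero_mul]

end Matrix

theorem gKP_no_nonsingular_solution_general {N : ℕ} (hN : 2 ≤ N) (σ : ℝ)
    (B : Matrix (Fin (N + 1)) (Fin (N + 1)) ℝ)
    (hB : ∀ i j : Fin (N + 1), B i j =
      if (i = 0 ∧ j = Fin.last N) ∨ (i = Fin.last N ∧ j = 0) then 1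
      else if i = j ∧ i ≠ 0 ∧ i ≠ Fin.last N then 2 * σ
      else 0)
    (A : Matrix (Fin (N + 1)) (Fin (N + 1)) ℝ)
    (h : ((1 / 2 : ℝ) * (B * A).trace) • A - A * B * A = 0) :
    A.det = 0 := by
  by_contra hdet
  have hcard : (Fintype.card (Fin (N + 1)) : ℝ) ≠ 2 := by
    rw [Fintype.card_fin]; norm_cast; omega
  have hB0 : B = 0 :=
    Matrix.eq_zero_of_half_trace_smul_eq_mul_mul (isUnit_iff_ne_zero.mpr hdet) hcard
      (sub_eq_zero.mp h)
  have hcorner : B 0 (Fin.last N) = 1 := by simp [hB]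
  simp [hB0] at hcorner

theorem gKP_no_nonsingular_solution {N : ℕ} (hN : 2 ≤ N) (σ : ℝ) (hσ : σ ≠ 0)
    (B : Matrix (Fin (N + 1)) (Fin (N + 1)) ℝ)
    (hB : ∀ i j : Fin (N + 1), B i j =
      if (i = 0 ∧ j = Fin.last N) ∨ (i = Fin.last N ∧ j = 0) then 1
      else if i = j ∧ i ≠ 0 ∧ i ≠ Fin.last N then 2 * σ
      else 0)
    (A : Matrix (Fin (N + 1)) (Fin (N + 1)) ℝ)
    (hA : A.PosSemidef)
    (h : ((1 / 2 : ℝ) * (B * A).trace) • A - A * B * A = 0) :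
    A.det = 0 :=
  gKP_no_nonsingular_solution_general hN σ B hB A h
end
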